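/- arXiv:1311.1534 — 4 statements merged into one kernel-verified Lean document; each statement's English description precedes it below -/
import Mathlib

section
/- For any n-bit string t, the product of stabilizer generators ∏_{v : t_v = 1} S_v equals (-1)^{(1/2) t·At} X^t Z^{At}, where A is the adjacency matrix of the graph. -/
open Finset

/-- Tensor-product Pauli `X^s`: flips the bits in the support of `s`. -/
noncomputable def XOp (n : ℕ) (s : Fin n → Bool) :
    Module.End ℂ ((Fin n → Bool) → ℂ) :=
  LinearMap.funLeft ℂ ℂ (fun x w => xor (x w) (s w))

/-- Tensor-product Pauli `Z^s`: phase `(-1)^{s·x}` on basis state `x`. -/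
noncomputable def ZOp (n : ℕ) (s : Fin n → Bool) :
    Module.End ℂ ((Fin n → Bool) → ℂ) where
  toFun f := fun x =>
    (-1 : ℂ) ^ (Finset.univ.filter (fun w => s w = true ∧ x w = true)).card * f x
  map_add' f g := by funext x; simp [mul_add]
  map_smul' c f := by funext x; simp [smul_eq_mul]; ring

/-- The graph state of a graph `G` on `n` vertices, as a vector in
`(ℂ²)^{⊗n} ≃ ((Fin n → Bool) → ℂ)`. -/
noncomputable def graphState {n : ℕ} (G : SimpleGraph (Fin n)) [DecidableRel G.Adj] :
    (Fin n → Bool) → ℂ :=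
  fun x => (Real.sqrt (2 ^ n) : ℂ)⁻¹ *
    (-1 : ℂ) ^ (Finset.univ.filter
      (fun p : Fin n × Fin n =>
        p.1 < p.2 ∧ G.Adj p.1 p.2 ∧ x p.1 = true ∧ x p.2 = true)).card

/-- Indicator bit string of a single vertex. -/
def indVec (n : ℕ) (v : Fin n) : Fin n → Bool := fun w => decide (w = v)

/-- Row `v` of the adjacency matrix of `G` as a bit string (the neighbourhood of `v`). -/
def adjRow {n : ℕ} (G : SimpleGraph (Fin n)) [DecidableRel G.Adj] (v : Fin n) :
    Fin n → Bool := fun w => decide (G.Adj v w)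

/-- Stabilizer generator `S_v = X_v Z^{A 1_v}`. -/
noncomputable def stabGen {n : ℕ} (G : SimpleGraph (Fin n)) [DecidableRel G.Adj]
    (v : Fin n) : Module.End ℂ ((Fin n → Bool) → ℂ) :=
  XOp n (indVec n v) * ZOp n (adjRow G v)
/-!
Each generator is a Pauli operator `X^s Z^r`, and these multiply by
`(X^{s₁} Z^{r₁}) (X^{s₂} Z^{r₂}) = (-1)^{|r₁ ∧ s₂|} X^{s₁ ⊕ s₂} Z^{r₁ ⊕ r₂}`.
Multiplying the `S_v` in with `v` larger than all vertices taken so far, the new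
vertex `a` contributes the sign `(-1)^{|N(a) ∩ s|}`, one factor `-1` per edge from `a`
down to `s`; so the total sign counts the edges inside the support of `t`, while the
`X`- and `Z`-strings add up to `t` and `At`.
-/

section Pauli

variable {n : ℕ}

@[simp]
lemma XOp_apply (s : Fin n → Bool) (f : (Fin n → Bool) → ℂ) (x : Fin n → Bool) :
    XOp n s f x = f (fun w => xor (x w) (s w)) := rfl

@[simp]
lemma ZOp_apply (r : Fin n → Bool) (f : (Fin n → Bool) → ℂ) (x : Fin n → Bool) :
    ZOp n r f x = (-1 : ℂ) ^ #{w | r w = true ∧ x w = true} * f x := rfl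

lemma XOp_false : XOp n (fun _ => false) = 1 := by
  refine LinearMap.ext fun f => funext fun x => ?_
  simp

lemma ZOp_false : ZOp n (fun _ => false) = 1 := by
  refine LinearMap.ext fun f => funext fun x => ?_
  simp

lemma XOp_mul (s₁ s₂ : Fin n → Bool) :
    XOp n s₁ * XOp n s₂ = XOp n (fun w => xor (s₁ w) (s₂ w)) := by
  refine LinearMap.ext fun f => funext fun x => ?_
  simp

lemma ZOp_mul (r₁ r₂ : Fin n → Bool) :
    ZOp n r₁ * ZOp n r₂ = ZOp n (fun w => xor (r₁ w) (r₂ w)) := by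
  refine LinearMap.ext fun f => funext fun x => ?_
  simp only [Module.End.mul_apply, ZOp_apply, ← mul_assoc, ← prod_const, prod_filter,
    ← prod_mul_distrib]
  congr 1
  refine prod_congr rfl fun w _ => ?_
  cases r₁ w <;> cases r₂ w <;> cases x w <;> simp

lemma ZOp_mul_XOp (r s : Fin n → Bool) :
    ZOp n r * XOp n s = (-1 : ℂ) ^ #{w | r w = true ∧ s w = true} • (XOp n s * ZOp n r) := by
  refine LinearMap.ext fun f => funext fun x => ?_
  simp only [Module.End.mul_apply, LinearMap.smul_apply, Pi.smul_apply, smul_eq_mul,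
    XOp_apply, ZOp_apply, ← mul_assoc, ← prod_const, prod_filter, ← prod_mul_distrib]
  congr 1
  refine prod_congr rfl fun w _ => ?_
  cases r w <;> cases s w <;> cases x w <;> simp

lemma XOp_mul_ZOp_mul_XOp_mul_ZOp (s₁ r₁ s₂ r₂ : Fin n → Bool) :
    XOp n s₁ * ZOp n r₁ * (XOp n s₂ * ZOp n r₂) =
      (-1 : ℂ) ^ #{w | r₁ w = true ∧ s₂ w = true} •
        (XOp n (fun w => xor (s₁ w) (s₂ w)) * ZOp n (fun w => xor (r₁ w) (r₂ w))) := by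
  rw [mul_assoc, ← mul_assoc (ZOp n r₁), ZOp_mul_XOp, smul_mul_assoc, mul_smul_comm,
    mul_assoc, ← mul_assoc, XOp_mul, ZOp_mul]

end Pauli

section Graph

variable {V : Type*} (G : SimpleGraph V) [DecidableRel G.Adj]

lemma decide_odd_card_filter_adj_insert [DecidableEq V] {a : V} {s : Finset V} (ha : a ∉ s)
    (w : V) :
    decide (Odd #{u ∈ insert a s | G.Adj w u}) =
      xor (decide (G.Adj a w)) (decide (Odd #{u ∈ s | G.Adj w u})) := by
  rw [filter_insert]
  by_cases haw : G.Adj a w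
  · rw [if_pos haw.symm, card_insert_of_notMem (fun h => ha (mem_filter.mp h).1)]
    simp only [haw, Nat.odd_add_one, decide_not, decide_true, Bool.true_xor]
  · rw [if_neg (fun h => haw h.symm)]
    simp [haw]

variable [Fintype V] [LinearOrder V]

def numEdgesWithin (s : Finset V) : ℕ :=
  #{p : V × V | p.1 < p.2 ∧ G.Adj p.1 p.2 ∧ p.1 ∈ s ∧ p.2 ∈ s}

lemma numEdgesWithin_empty : numEdgesWithin G ∅ = 0 := by
  simp [numEdgesWithin]

lemma numEdgesWithin_insert_of_forall_lt {a : V} {s : Finset V} (has : ∀ x ∈ s, x < a) :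
    numEdgesWithin G (insert a s) = numEdgesWithin G s + #{u ∈ s | G.Adj a u} := by
  have ha : a ∉ s := fun h => lt_irrefl a (has a h)
  have hsplit :
      univ.filter
          (fun p : V × V => p.1 < p.2 ∧ G.Adj p.1 p.2 ∧ p.1 ∈ insert a s ∧ p.2 ∈ insert a s) =
        univ.filter (fun p : V × V => p.1 < p.2 ∧ G.Adj p.1 p.2 ∧ p.1 ∈ s ∧ p.2 ∈ s) ∪
        {u ∈ s | G.Adj a u}.map (Function.Embedding.sectL V a) := by
    ext ⟨x, y⟩
    simp only [mem_filter, mem_univ, true_and, mem_union, mem_map, Function.Embedding.sectL_apply,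
      Prod.mk.injEq, mem_insert]
    constructor
    · rintro ⟨hxy, hadj, hx | hx, hy | hy⟩
      · exact absurd (hx.trans hy.symm) hxy.ne
      · exact absurd (has y hy) (hx ▸ hxy).not_gt
      · exact Or.inr ⟨x, ⟨hx, hy ▸ hadj.symm⟩, rfl, hy.symm⟩
      · exact Or.inl ⟨hxy, hadj, hx, hy⟩
    · rintro (⟨hxy, hadj, hx, hy⟩ | ⟨u, ⟨hu, hadj⟩, rfl, rfl⟩)
      · exact ⟨hxy, hadj, Or.inr hx, Or.inr hy⟩
      · exact ⟨has u hu, hadj.symm, Or.inr hu, Or.inl rfl⟩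
  rw [numEdgesWithin, hsplit, card_union_of_disjoint, card_map, ← numEdgesWithin]
  refine disjoint_left.2 ?_
  rintro ⟨x, y⟩ hxy hmap
  obtain ⟨u, -, hu⟩ := mem_map.mp hmap
  exact ha ((Prod.mk.inj hu).2 ▸ (mem_filter.mp hxy).2.2.2.2)

end Graph

lemma noncommProd_stabGen {n : ℕ} (G : SimpleGraph (Fin n)) [DecidableRel G.Adj]
    (s : Finset (Fin n))
    (hcomm : (s : Set (Fin n)).Pairwise fun a b => Commute (stabGen G a) (stabGen G b)) :
    s.noncommProd (stabGen G) hcomm = (-1 : ℂ) ^ numEdgesWithin G s •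
      (XOp n (fun w => decide (w ∈ s)) * ZOp n (fun w => decide (Odd #{u ∈ s | G.Adj w u}))) := by
  induction s using Finset.induction_on_max with
  | empty => simp [numEdgesWithin_empty, XOp_false, ZOp_false]
  | insert a s has ih =>
    have ha : a ∉ s := fun h => lt_irrefl a (has a h)
    rw [noncommProd_insert_of_notMem _ _ _ _ ha, ih, stabGen, mul_smul_comm,
      XOp_mul_ZOp_mul_XOp_mul_ZOp, smul_smul, ← pow_add, numEdgesWithin_insert_of_forall_lt G has]
    congr 3
    · congr 1
      ext u
      simp [adjRow, and_comm]
    · funext w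
      by_cases hw : w = a <;> simp [indVec, hw, ha]
    · funext w
      exact (decide_odd_card_filter_adj_insert G ha w).symm

/-- The product of the stabilizer generators over the support of a bit string `t`
equals `(-1)^{(1/2) t·At} X^t Z^{At}`, where `(1/2) t·At` is the number of edges
with both endpoints in the support of `t` and `At` is the adjacency matrix acting
on `t` over F₂. -/
theorem prod_stabGen_eq {n : ℕ} (G : SimpleGraph (Fin n)) [DecidableRel G.Adj]
    (t : Fin n → Bool)
    (hcomm : ((Finset.univ.filter (fun v => t v = true)) : Set (Fin n)).Pairwise
      (fun a b => Commute (stabGen G a) (stabGen G b))) :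
    (Finset.univ.filter (fun v => t v = true)).noncommProd (fun v => stabGen G v) hcomm
      = ((-1 : ℂ) ^ (Finset.univ.filter
            (fun p : Fin n × Fin n =>
              p.1 < p.2 ∧ G.Adj p.1 p.2 ∧ t p.1 = true ∧ t p.2 = true)).card) •
          (XOp n t *
            ZOp n (fun w => decide
              (Odd (Finset.univ.filter (fun u => G.Adj w u ∧ t u = true)).card))) := by
  rw [noncommProd_stabGen]
  congr 3
  · simp [numEdgesWithin]
  · simp
  · funext w
    simp [filter_filter, and_comm]
end

section
/- If T = {u,v,w} is a triangle in a graph G with characteristic vector τ, then -X^τ Z^{Aτ} is a stabilizer of the graph state |G⟩, i.e. -X^τ Z^{Aτ} |G⟩ = |G⟩. -/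
open Finset

lemma zmod2_odd_iff (m : ℕ) : Odd m ↔ (m : ZMod 2) = 1 := by
  have h := (ZMod.natCast_mod m 2).symm
  rcases Nat.mod_two_eq_zero_or_one m with h0 | h0 <;>
    rw [Nat.odd_iff, h, h0] <;> simp

lemma cast_eq_ite_odd (m : ℕ) : (m : ZMod 2) = if Odd m then 1 else 0 := by
  have h2 : ∀ a : ZMod 2, a = 0 ∨ a = 1 := by decide
  by_cases h : Odd m
  · rw [if_pos h, (zmod2_odd_iff m).mp h]
  · rw [if_neg h]
    rcases h2 (m : ZMod 2) with h0 | h0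
    · exact h0
    · exact absurd ((zmod2_odd_iff m).mpr h0) h

lemma ite_and_mul (P Q : Prop) [Decidable P] [Decidable Q] :
    (if P ∧ Q then (1 : ZMod 2) else 0)
      = (if P then (1 : ZMod 2) else 0) * (if Q then (1 : ZMod 2) else 0) := by
  by_cases hP : P <;> by_cases hQ : Q <;> simp [hP, hQ]

lemma card_filter_cast {α : Type*} (s : Finset α) (p : α → Prop) [DecidablePred p] :
    ((Finset.filter p s).card : ZMod 2) = ∑ a ∈ s, if p a then (1 : ZMod 2) else 0 := by
  rw [Finset.card_filter, Nat.cast_sum]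
  simp

lemma sum_swap_pairs {n : ℕ} (f : Fin n × Fin n → ZMod 2) :
    ∑ p : Fin n × Fin n, f p = ∑ p : Fin n × Fin n, f p.swap :=
  Fintype.sum_equiv (Equiv.prodComm (Fin n) (Fin n)) _ _ (fun _ => rfl)

private lemma key {n : ℕ} (G : SimpleGraph (Fin n)) [DecidableRel G.Adj]
    (u v w : Fin n) (huv : G.Adj u v) (huw : G.Adj u w) (hvw : G.Adj v w)
    (x : Fin n → Bool) :
    Odd ((Finset.filter (fun z =>
          Odd (Finset.filter (fun y => G.Adj z y ∧ (y = u ∨ y = v ∨ y = w)) Finset.univ).card ∧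
          (x z ^^ decide (z = u ∨ z = v ∨ z = w)) = true) Finset.univ).card
      + (Finset.filter (fun p : Fin n × Fin n => p.1 < p.2 ∧ G.Adj p.1 p.2 ∧
          (x p.1 ^^ decide (p.1 = u ∨ p.1 = v ∨ p.1 = w)) = true ∧
          (x p.2 ^^ decide (p.2 = u ∨ p.2 = v ∨ p.2 = w)) = true) Finset.univ).card
      + (Finset.filter (fun p : Fin n × Fin n => p.1 < p.2 ∧ G.Adj p.1 p.2 ∧
          x p.1 = true ∧ x p.2 = true) Finset.univ).card) := by
  classical
  set X : Fin n → ZMod 2 := fun a => if x a = true then 1 else 0 with hX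
  set T : Fin n → ZMod 2 := fun a => if a = u ∨ a = v ∨ a = w then 1 else 0 with hT
  set A : Fin n → Fin n → ZMod 2 := fun a b => if G.Adj a b then 1 else 0 with hA
  set L : Fin n × Fin n → ZMod 2 := fun p => if p.1 < p.2 then 1 else 0 with hL
  have hApp : ∀ a, A a a = 0 := by intro a; simp [hA]
  have hAsym : ∀ a b, A a b = A b a := by
    intro a b; simp only [hA]; by_cases h : G.Adj a b
    · rw [if_pos h, if_pos h.symm]
    · rw [if_neg h, if_neg (fun h' => h h'.symm)]
  have hxor : ∀ a, (if (x a ^^ decide (a = u ∨ a = v ∨ a = w)) = true then (1 : ZMod 2) else 0)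
      = X a + T a := by
    intro a
    by_cases h : a = u ∨ a = v ∨ a = w <;> cases hxa : x a <;>
      simp [hX, hT, h, hxa] <;> decide
  rw [zmod2_odd_iff]
  push_cast
  rw [card_filter_cast, card_filter_cast, card_filter_cast]
  have h1 : (∑ z : Fin n, if
        (Odd (Finset.filter (fun y => G.Adj z y ∧ (y = u ∨ y = v ∨ y = w)) Finset.univ).card ∧
          (x z ^^ decide (z = u ∨ z = v ∨ z = w)) = true) then (1 : ZMod 2) else 0)
      = ∑ p : Fin n × Fin n, (A p.1 p.2 * T p.2 * X p.1 + A p.1 p.2 * T p.2 * T p.1) := by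
    rw [Fintype.sum_prod_type]
    refine Finset.sum_congr rfl fun z _ => ?_
    have hs : ∑ y : Fin n, (A z y * T y * X z + A z y * T y * T z)
        = (∑ y : Fin n, A z y * T y) * (X z + T z) := by
      rw [Finset.sum_mul]
      exact Finset.sum_congr rfl fun y _ => by ring
    rw [hs, ite_and_mul, hxor]
    congr 1
    rw [← cast_eq_ite_odd, card_filter_cast]
    exact Finset.sum_congr rfl fun y _ => by rw [ite_and_mul]
  have h2 : (∑ p : Fin n × Fin n, if (p.1 < p.2 ∧ G.Adj p.1 p.2 ∧
          (x p.1 ^^ decide (p.1 = u ∨ p.1 = v ∨ p.1 = w)) = true ∧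
          (x p.2 ^^ decide (p.2 = u ∨ p.2 = v ∨ p.2 = w)) = true) then (1 : ZMod 2) else 0)
      = ∑ p : Fin n × Fin n, (L p * A p.1 p.2 * X p.1 * X p.2
          + L p * A p.1 p.2 * X p.1 * T p.2 + L p * A p.1 p.2 * T p.1 * X p.2
          + L p * A p.1 p.2 * T p.1 * T p.2) := by
    refine Finset.sum_congr rfl fun p _ => ?_
    rw [ite_and_mul, ite_and_mul, ite_and_mul, hxor, hxor]
    show L p * (A p.1 p.2 * ((X p.1 + T p.1) * (X p.2 + T p.2))) = _
    ring
  have h3 : (∑ p : Fin n × Fin n, if (p.1 < p.2 ∧ G.Adj p.1 p.2 ∧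
          x p.1 = true ∧ x p.2 = true) then (1 : ZMod 2) else 0)
      = ∑ p : Fin n × Fin n, L p * A p.1 p.2 * X p.1 * X p.2 := by
    refine Finset.sum_congr rfl fun p _ => ?_
    rw [ite_and_mul, ite_and_mul, ite_and_mul]
    show L p * (A p.1 p.2 * (X p.1 * X p.2)) = _
    ring
  rw [h1, h2, h3, Finset.sum_add_distrib]
  have hQ1 : ∑ p : Fin n × Fin n, A p.1 p.2 * T p.2 * X p.1
      = ∑ p : Fin n × Fin n, L p * A p.1 p.2 * X p.1 * T p.2
        + ∑ p : Fin n × Fin n, L p * A p.1 p.2 * T p.1 * X p.2 := by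
    rw [sum_swap_pairs (fun p => L p * A p.1 p.2 * T p.1 * X p.2),
      ← Finset.sum_add_distrib]
    refine Finset.sum_congr rfl fun p _ => ?_
    simp only [hL, Prod.fst_swap, Prod.snd_swap]
    rcases lt_trichotomy p.1 p.2 with h | h | h
    · rw [if_pos h, if_neg (asymm h)]; ring
    · have h0 : A p.1 p.2 = 0 := by rw [h]; exact hApp p.2
      have h0' : A p.2 p.1 = 0 := by rw [h]; exact hApp p.2
      rw [h0, h0']; ring
    · rw [if_neg (asymm h), if_pos h, hAsym p.2 p.1]; ring
  have hQ2 : ∑ p : Fin n × Fin n, A p.1 p.2 * T p.2 * T p.1 = 0 := by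
    have e1 : ∑ p : Fin n × Fin n,
          L p.swap * A p.swap.1 p.swap.2 * T p.swap.1 * T p.swap.2
        = ∑ p : Fin n × Fin n, L p * A p.1 p.2 * T p.1 * T p.2 :=
      (sum_swap_pairs (fun p => L p * A p.1 p.2 * T p.1 * T p.2)).symm
    have e2 : ∑ p : Fin n × Fin n, A p.1 p.2 * T p.2 * T p.1
        = ∑ p : Fin n × Fin n, (L p * A p.1 p.2 * T p.1 * T p.2
            + L p.swap * A p.swap.1 p.swap.2 * T p.swap.1 * T p.swap.2) := by
      refine Finset.sum_congr rfl fun p _ => ?_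
      simp only [hL, Prod.fst_swap, Prod.snd_swap]
      rcases lt_trichotomy p.1 p.2 with h | h | h
      · rw [if_pos h, if_neg (asymm h)]; ring
      · have h0 : A p.1 p.2 = 0 := by rw [h]; exact hApp p.2
        have h0' : A p.2 p.1 = 0 := by rw [h]; exact hApp p.2
        rw [h0, h0']; ring
      · rw [if_neg (asymm h), if_pos h, hAsym p.2 p.1]; ring
    rw [e2, Finset.sum_add_distrib, e1, CharTwo.add_self_eq_zero]
  have hD : ∀ a b : Fin n, (∑ p : Fin n × Fin n, L p * A p.1 p.2 *
        (if p.1 = a then (1 : ZMod 2) else 0) * (if p.2 = b then 1 else 0))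
      = L (a, b) * A a b := by
    intro a b
    rw [Finset.sum_eq_single (a, b)]
    · simp
    · intro p _ hne
      by_cases h1 : p.1 = a
      · by_cases h2 : p.2 = b
        · exact absurd (Prod.ext h1 h2) hne
        · simp [h2]
      · simp [h1]
    · intro h; exact absurd (Finset.mem_univ _) h
  have hTsplit : ∀ a : Fin n, T a = (if a = u then (1 : ZMod 2) else 0)
      + (if a = v then 1 else 0) + (if a = w then 1 else 0) := by
    intro a
    rw [hT]
    by_cases h1 : a = u
    · subst h1
      rw [if_neg huv.ne, if_neg huw.ne]
      simp
    · by_cases h2 : a = v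
      · subst h2
        rw [if_neg (fun h => huv.ne h.symm), if_neg hvw.ne]
        simp [h1]
      · by_cases h3 : a = w
        · subst h3
          rw [if_neg (fun h => huw.ne h.symm), if_neg (fun h => hvw.ne h.symm)]
          simp [h1, h2]
        · simp [h1, h2, h3]
  have hpair : ∀ a b : Fin n, G.Adj a b →
      (L (a, b) * A a b + L (b, a) * A b a) = 1 := by
    intro a b hab
    have ha1 : A a b = 1 := by simp [hA, hab]
    have ha2 : A b a = 1 := by simp [hA, hab.symm]
    rw [ha1, ha2]
    rcases hab.ne.lt_or_gt with h | h
    · simp [hL, h, asymm h]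
    · simp [hL, h, asymm h]
  have hP3 : ∑ p : Fin n × Fin n, L p * A p.1 p.2 * T p.1 * T p.2 = 1 := by
    have expand : ∑ p : Fin n × Fin n, L p * A p.1 p.2 * T p.1 * T p.2
        = ∑ p : Fin n × Fin n,
          (L p * A p.1 p.2 * (if p.1 = u then (1 : ZMod 2) else 0) * (if p.2 = u then 1 else 0)
          + L p * A p.1 p.2 * (if p.1 = u then (1 : ZMod 2) else 0) * (if p.2 = v then 1 else 0)
          + L p * A p.1 p.2 * (if p.1 = u then (1 : ZMod 2) else 0) * (if p.2 = w then 1 else 0)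
          + L p * A p.1 p.2 * (if p.1 = v then (1 : ZMod 2) else 0) * (if p.2 = u then 1 else 0)
          + L p * A p.1 p.2 * (if p.1 = v then (1 : ZMod 2) else 0) * (if p.2 = v then 1 else 0)
          + L p * A p.1 p.2 * (if p.1 = v then (1 : ZMod 2) else 0) * (if p.2 = w then 1 else 0)
          + L p * A p.1 p.2 * (if p.1 = w then (1 : ZMod 2) else 0) * (if p.2 = u then 1 else 0)
          + L p * A p.1 p.2 * (if p.1 = w then (1 : ZMod 2) else 0) * (if p.2 = v then 1 else 0)
          + L p * A p.1 p.2 * (if p.1 = w then (1 : ZMod 2) else 0) * (if p.2 = w then 1 else 0)) := by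
      refine Finset.sum_congr rfl fun p _ => ?_
      rw [hTsplit p.1, hTsplit p.2]
      ring
    rw [expand]
    simp only [Finset.sum_add_distrib, hD]
    have huu : A u u = 0 := hApp u
    have hvv : A v v = 0 := hApp v
    have hww : A w w = 0 := hApp w
    have e1 := hpair u v huv
    have e2 := hpair u w huw
    have e3 := hpair v w hvw
    have h3 : (1 : ZMod 2) + 1 + 1 = 1 := by decide
    calc L (u, u) * A u u + L (u, v) * A u v + L (u, w) * A u w
          + L (v, u) * A v u + L (v, v) * A v v + L (v, w) * A v w
          + L (w, u) * A w u + L (w, v) * A w v + L (w, w) * A w w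
        = (L (u, v) * A u v + L (v, u) * A v u)
          + (L (u, w) * A u w + L (w, u) * A w u)
          + (L (v, w) * A v w + L (w, v) * A w v) := by
          rw [huu, hvv, hww]; ring
      _ = 1 := by rw [e1, e2, e3]; exact h3
  rw [hQ1, hQ2]
  simp only [Finset.sum_add_distrib]
  rw [hP3]
  generalize (∑ p : Fin n × Fin n, L p * A p.1 p.2 * X p.1 * T p.2) = a
  generalize (∑ p : Fin n × Fin n, L p * A p.1 p.2 * T p.1 * X p.2) = b
  generalize (∑ p : Fin n × Fin n, L p * A p.1 p.2 * X p.1 * X p.2) = c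
  revert a b c
  decide


lemma neg_pow_helper (a b c : ℕ) (h : Odd (a + b + c)) (k : ℂ) :
    -((-1 : ℂ) ^ a * (k * (-1) ^ b)) = k * (-1) ^ c := by
  have h2 : ((-1 : ℂ)) ^ a * (-1) ^ b * (-1) ^ c = -1 := by
    rw [← pow_add, ← pow_add]; exact h.neg_one_pow
  have h3 : ((-1 : ℂ)) ^ c * (-1) ^ c = 1 := by
    rw [← pow_add]; exact Even.neg_one_pow (Even.add_self c)
  linear_combination (-k * (-1 : ℂ) ^ c) * h2 + (k * (-1 : ℂ) ^ a * (-1 : ℂ) ^ b) * h3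

/-- If `{u,v,w}` is a triangle in `G` with characteristic vector `τ`, then
`-X^τ Z^{Aτ}` stabilizes the graph state: `-X^τ Z^{Aτ} |G⟩ = |G⟩`. -/
theorem triangle_stabilizer {n : ℕ} (G : SimpleGraph (Fin n)) [DecidableRel G.Adj]
    (u v w : Fin n) (huv : G.Adj u v) (huw : G.Adj u w) (hvw : G.Adj v w) :
    -((XOp n (fun x => decide (x = u ∨ x = v ∨ x = w)) *
        ZOp n (fun z => decide
          (Odd (Finset.univ.filter
            (fun y => G.Adj z y ∧ (y = u ∨ y = v ∨ y = w))).card)))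
        (graphState G)) = graphState G := by
  funext x
  simp only [XOp, ZOp, graphState, Module.End.mul_apply, LinearMap.funLeft_apply,
    LinearMap.coe_mk, AddHom.coe_mk, Pi.neg_apply, decide_eq_true_eq]
  exact neg_pow_helper _ _ _ (key G u v w huv huw hvw x) _
end

section
/- Suppose a protocol TEST accepts honest provers with probability c_t and any dishonest provers with probability at most s_t < c_t, and CALCULATE accepts honest provers with probability ≥ 2/3 when x ∈ L while dishonest provers by definition accept with probability > 1/2 when x ∉ L, and non-dishonest provers accept CALCULATE with probability ≤ 1/2 when x ∉ L. Then choosing q = (c_t - s_t)/(c_t - s_t + 1), the protocol that runs CALCULATE with probability q and TEST with probability 1-q has completeness c_ip and soundness s_ip with c_ip - s_ip ≥ (c_t - s_t)/(6(1 + c_t - s_t)). -/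
/-! The weight `q = d / (d + 1)`, with `d = c_t - s_t`, is chosen so that `(1 - q) d = q`: what a
dishonest prover loses on TEST exactly pays for what it can gain on CALCULATE. The gap against
dishonest provers is then `q (2/3 - 1) + q = 2q/3`, the gap against non-dishonest ones is
`q (2/3 - 1/2) = q/6`, and `q/6` is the claimed bound. -/

lemma one_sub_div_add_one_mul_self {K : Type*} [Field K] {d : K} (hd : d + 1 ≠ 0) :
    (1 - d / (d + 1)) * d = d / (d + 1) := by
  field_simp
  ring

theorem mixed_protocol_gap_general (ct st : ℝ) (hsc : st < ct)
    (q cip sip : ℝ)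
    (hq : q = (ct - st) / (ct - st + 1))
    (hcip : cip = q * (2 / 3) + (1 - q) * ct)
    (hsip : sip = max (q * 1 + (1 - q) * st) (q * (1 / 2) + (1 - q) * ct)) :
    (ct - st) / (6 * (1 + (ct - st))) ≤ cip - sip := by
  have hd : 0 < ct - st := sub_pos.mpr hsc
  have hq_nonneg : 0 ≤ q := hq ▸ by positivity
  have hq_balance : (1 - q) * (ct - st) = q :=
    hq ▸ one_sub_div_add_one_mul_self (by positivity)
  have hbound : (ct - st) / (6 * (1 + (ct - st))) = q / 6 := by
    rw [hq, add_comm (1 : ℝ), div_div, mul_comm]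
  have gap_dishonest : cip - (q * 1 + (1 - q) * st) = 2 / 3 * q := by
    rw [hcip]
    linear_combination hq_balance
  have gap_honest : cip - (q * (1 / 2) + (1 - q) * ct) = q / 6 := by
    rw [hcip]
    ring
  rw [hbound, le_sub_comm, hsip]
  exact max_le (by linarith) (by linarith)

/-- Mixing CALCULATE (accepted w.p. ≥ 2/3 by honest provers when x ∈ L, > 1/2
only by dishonest provers when x ∉ L, ≤ 1/2 by non-dishonest provers) with TEST
(accepted w.p. c_t by honest provers and ≤ s_t by dishonest ones) with weight
`q = (c_t - s_t)/(c_t - s_t + 1)` yields a completeness–soundness gap of at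
least `(c_t - s_t)/(6(1 + c_t - s_t))`. -/
theorem mixed_protocol_gap (ct st : ℝ) (hst : 0 ≤ st) (hsc : st < ct) (hct : ct ≤ 1)
    (q cip sip : ℝ)
    (hq : q = (ct - st) / (ct - st + 1))
    (hcip : cip = q * (2 / 3) + (1 - q) * ct)
    (hsip : sip = max (q * 1 + (1 - q) * st) (q * (1 / 2) + (1 - q) * ct)) :
    (ct - st) / (6 * (1 + (ct - st))) ≤ cip - sip :=
  mixed_protocol_gap_general ct st hsc q cip sip hq hcip hsip
end

section
/- Let X'_v be self-adjoint involutions for v ∈ {u,v,w} on a Hilbert space (tensor product of three factors, each acting on its own factor), and Z'_v likewise, with operators on different factors commuting. If a unit vector ψ satisfies -X'_u X'_v X'_w (X'_u Z'_v Z'_w)(Z'_u X'_v Z'_w)(Z'_u Z'_v X'_w) ψ = ψ, then X'_v Z'_v ψ = -Z'_v X'_v ψ. -/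
/-!
Conjugating by an involution fixes everything that commutes with it. Pairing each of the
repeated `u`- and `w`-factors of the stabilizer product this way collapses it to
`X'_v Z'_v X'_v Z'_v`, so `ψ` is a `-1`-eigenvector of the group commutator of `X'_v` and `Z'_v`;
applying `Z'_v X'_v` turns this into the anticommutation relation.
-/

theorem Commute.mul_mul_eq_of_mul_self_eq_one {M : Type*} [Monoid M] {a b : M}
    (hab : Commute a b) (ha : a * a = 1) : a * b * a = b := by
  rw [hab.eq, mul_assoc, ha, mul_one]

theorem triangle_stabilizer_product_eq {M : Type*} [Monoid M] (xu xv xw zu zv zw : M)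
    (hxu : xu * xu = 1) (hxw : xw * xw = 1) (hzu : zu * zu = 1) (hzw : zw * zw = 1)
    (hxuxv : Commute xu xv) (hxuxw : Commute xu xw) (hxvxw : Commute xv xw)
    (hzuzw : Commute zu zw) (hxvzu : Commute xv zu) (hxvzw : Commute xv zw)
    (hxwzv : Commute xw zv) :
    (xu * xv * xw) * (xu * zv * zw) * (zu * xv * zw) * (zu * zv * xw) = xv * zv * xv * zv := by
  have hu : xu * (xv * xw) * xu = xv * xw :=
    (hxuxv.mul_right hxuxw).mul_mul_eq_of_mul_self_eq_one hxu
  have hu' : zu * (xv * zw) * zu = xv * zw :=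
    (hxvzu.symm.mul_right hzuzw).mul_mul_eq_of_mul_self_eq_one hzu
  have hw : zw * xv * zw = xv := hxvzw.symm.mul_mul_eq_of_mul_self_eq_one hzw
  have hw' : xw * (zv * xv * zv) * xw = zv * xv * zv :=
    ((hxwzv.mul_right hxvxw.symm).mul_right hxwzv).mul_mul_eq_of_mul_self_eq_one hxw
  calc (xu * xv * xw) * (xu * zv * zw) * (zu * xv * zw) * (zu * zv * xw)
      = xu * (xv * xw) * xu * (zv * zw) * (zu * (xv * zw) * zu) * (zv * xw) := by
        simp only [mul_assoc]
    _ = xv * (xw * (zv * (zw * xv * zw) * zv) * xw) := by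
        rw [hu, hu']; simp only [mul_assoc]
    _ = xv * zv * xv * zv := by
        rw [hw, hw']; simp only [mul_assoc]

theorem Module.End.mul_apply_eq_neg_of_commutator_apply_eq_neg {R M : Type*} [Semiring R]
    [AddCommGroup M] [Module R M] {a b : Module.End R M} (ha : a * a = 1) (hb : b * b = 1)
    {ψ : M} (h : -((a * b * a * b) ψ) = ψ) : (a * b) ψ = -((b * a) ψ) := by
  have hba : b * a * (a * b * a * b) = a * b :=
    calc b * a * (a * b * a * b) = b * (a * a) * b * a * b := by simp only [mul_assoc]
      _ = a * b := by rw [ha, mul_one, hb, one_mul]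
  calc (a * b) ψ = (b * a * (a * b * a * b)) ψ := by rw [hba]
    _ = -((b * a) (-((a * b * a * b) ψ))) := by rw [map_neg, neg_neg, Module.End.mul_apply]
    _ = -((b * a) ψ) := by rw [h]

theorem triangle_anticommutation_general
    {E : Type*} [NormedAddCommGroup E] [InnerProductSpace ℂ E]
    (Xu Xv Xw Zu Zv Zw : Module.End ℂ E)
    (hXu2 : Xu * Xu = 1) (hXv2 : Xv * Xv = 1) (hXw2 : Xw * Xw = 1)
    (hZu2 : Zu * Zu = 1) (hZv2 : Zv * Zv = 1) (hZw2 : Zw * Zw = 1)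
    -- operators acting on distinct tensor factors commute
    (hXuXv : Commute Xu Xv) (hXuXw : Commute Xu Xw) (hXvXw : Commute Xv Xw)
    (hZuZw : Commute Zu Zw)
    (hXvZu : Commute Xv Zu) (hXvZw : Commute Xv Zw)
    (hXwZv : Commute Xw Zv)
    (ψ : E)
    (hstab : -(((Xu * Xv * Xw) * (Xu * Zv * Zw) * (Zu * Xv * Zw) * (Zu * Zv * Xw)) ψ)
        = ψ) :
    (Xv * Zv) ψ = -((Zv * Xv) ψ) := by
  rw [triangle_stabilizer_product_eq Xu Xv Xw Zu Zv Zw hXu2 hXw2 hZu2 hZw2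
    hXuXv hXuXw hXvXw hZuZw hXvZu hXvZw hXwZv] at hstab
  exact Module.End.mul_apply_eq_neg_of_commutator_apply_eq_neg hXv2 hZv2 hstab

/-- If `X'_a, Z'_a` (a ∈ {u,v,w}) are self-adjoint involutions, each acting on its
own tensor factor (so that operators with distinct labels commute), and a unit
vector ψ satisfies the triangle product-stabilizer condition
`-X'_u X'_v X'_w (X'_u Z'_v Z'_w)(Z'_u X'_v Z'_w)(Z'_u Z'_v X'_w) ψ = ψ`,
then `X'_v Z'_v ψ = -Z'_v X'_v ψ`. -/
theorem triangle_anticommutation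
    {E : Type*} [NormedAddCommGroup E] [InnerProductSpace ℂ E]
    (Xu Xv Xw Zu Zv Zw : Module.End ℂ E)
    (hXu : Xu.IsSymmetric) (hXv : Xv.IsSymmetric) (hXw : Xw.IsSymmetric)
    (hZu : Zu.IsSymmetric) (hZv : Zv.IsSymmetric) (hZw : Zw.IsSymmetric)
    (hXu2 : Xu * Xu = 1) (hXv2 : Xv * Xv = 1) (hXw2 : Xw * Xw = 1)
    (hZu2 : Zu * Zu = 1) (hZv2 : Zv * Zv = 1) (hZw2 : Zw * Zw = 1)
    -- operators acting on distinct tensor factors commute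
    (hXuXv : Commute Xu Xv) (hXuXw : Commute Xu Xw) (hXvXw : Commute Xv Xw)
    (hZuZv : Commute Zu Zv) (hZuZw : Commute Zu Zw) (hZvZw : Commute Zv Zw)
    (hXuZv : Commute Xu Zv) (hXuZw : Commute Xu Zw)
    (hXvZu : Commute Xv Zu) (hXvZw : Commute Xv Zw)
    (hXwZu : Commute Xw Zu) (hXwZv : Commute Xw Zv)
    (ψ : E) (hψ : ‖ψ‖ = 1)
    (hstab : -(((Xu * Xv * Xw) * (Xu * Zv * Zw) * (Zu * Xv * Zw) * (Zu * Zv * Xw)) ψ)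
        = ψ) :
    (Xv * Zv) ψ = -((Zv * Xv) ψ) :=
  triangle_anticommutation_general Xu Xv Xw Zu Zv Zw hXu2 hXv2 hXw2 hZu2 hZv2 hZw2 hXuXv hXuXw hXvXw
    hZuZw hXvZu hXvZw hXwZv ψ hstab
end
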